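/- arXiv:2112.11666 — 2 statements merged into one kernel-verified Lean document; each statement's English description precedes it below -/
import Mathlib

section
/- Let p and q be probability density functions with respect to a measure μ, and let γ ≥ 1, 1 ≤ α ≤ 2, and β be such that 1/α + 1/β = 1. Then the generalized Hellinger distance satisfies D_{γ,H}(P,Q) ≤ 2^{1 - 1/γ + 1/(γα)} D_{γα,H}(P,Q), where D_{γ,H}(P,Q) = ( (1/2) ∫ |p^{1/γ} - q^{1/γ}|^γ dμ )^{1/γ}. -/
open MeasureTheory
open scoped ENNReal

/-!
Put `u = p ^ (1 / (γ α))` and `v = q ^ (1 / (γ α))`, so that `p ^ (1 / γ) = u ^ α`. For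
`1 ≤ α ≤ 2` one has `|u ^ α - v ^ α| ≤ |u - v| (u ^ (α - 1) + v ^ (α - 1))`, so Hölder's
inequality with `α` and its conjugate exponent `β` gives
`∫ |u ^ α - v ^ α| ^ γ ≤ (∫ |u - v| ^ (γ α)) ^ (1 / α) * (∫ w ^ (γ β)) ^ (1 / β)`
with `w = u ^ (α - 1) + v ^ (α - 1)`. Since `(α - 1) β = α`, the power mean inequality bounds
`w ^ (γ β)` by `2 ^ (γ β - 1) (p + q)`, whose integral is `2 ^ (γ β)`; rearranging the powers of `2`
gives the claim.
-/

lemma rpow_sub_rpow_le_mul_add_rpow_sub_one {α a b : ℝ} (hα1 : 1 ≤ α) (hα2 : α ≤ 2)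
    (hb : 0 ≤ b) (hba : b ≤ a) :
    a ^ α - b ^ α ≤ (a - b) * (a ^ (α - 1) + b ^ (α - 1)) := by
  have ha : 0 ≤ a := hb.trans hba
  have hpow : ∀ {x : ℝ}, 0 ≤ x → x ^ α = x * x ^ (α - 1) := fun hx ↦ by
    rw [← Real.rpow_one_add' hx (by linarith), add_sub_cancel]
  have hsplit : ∀ {x : ℝ}, 0 ≤ x → x ^ (2 - α) * x ^ (α - 1) = x := fun hx ↦ by
    rw [← Real.rpow_add' hx (by norm_num), sub_add_sub_cancel]
    norm_num
  -- after writing `x = x ^ (2 - α) * x ^ (α - 1)`, this is the monotonicity of `t ↦ t ^ (2 - α)`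
  have cross : b * a ^ (α - 1) ≤ a * b ^ (α - 1) :=
    calc b * a ^ (α - 1) = b ^ (2 - α) * b ^ (α - 1) * a ^ (α - 1) := by rw [hsplit hb]
      _ ≤ a ^ (2 - α) * b ^ (α - 1) * a ^ (α - 1) := by gcongr
      _ = a * b ^ (α - 1) := by
        conv_rhs => rw [← hsplit ha]
        ring
  rw [hpow ha, hpow hb]
  linarith

lemma abs_rpow_sub_rpow_le {α a b : ℝ} (hα1 : 1 ≤ α) (hα2 : α ≤ 2) (ha : 0 ≤ a) (hb : 0 ≤ b) :
    |a ^ α - b ^ α| ≤ |a - b| * (a ^ (α - 1) + b ^ (α - 1)) := by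
  rcases le_total b a with hba | hab
  · have hpow := Real.rpow_le_rpow hb hba (by linarith : 0 ≤ α)
    rw [abs_of_nonneg (by linarith), abs_of_nonneg (by linarith)]
    exact rpow_sub_rpow_le_mul_add_rpow_sub_one hα1 hα2 hb hba
  · have hpow := Real.rpow_le_rpow ha hab (by linarith : 0 ≤ α)
    rw [abs_of_nonpos (by linarith), abs_of_nonpos (by linarith), neg_sub, neg_sub, add_comm]
    exact rpow_sub_rpow_le_mul_add_rpow_sub_one hα1 hα2 ha hab

lemma abs_sub_rpow_le_rpow_add_rpow {r a b : ℝ} (hr : 0 ≤ r) (ha : 0 ≤ a) (hb : 0 ≤ b) :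
    |a - b| ^ r ≤ a ^ r + b ^ r := by
  rcases le_total b a with hba | hab
  · have : |a - b| ≤ a := by rw [abs_of_nonneg (by linarith)]; linarith
    linarith [Real.rpow_le_rpow (abs_nonneg _) this hr, Real.rpow_nonneg hb r]
  · have : |a - b| ≤ b := by rw [abs_of_nonpos (by linarith)]; linarith
    linarith [Real.rpow_le_rpow (abs_nonneg _) this hr, Real.rpow_nonneg ha r]

lemma ENNReal.rpow_one_div_add_rpow_one_div_rpow_le (x y : ℝ≥0∞) {r : ℝ} (hr : 1 ≤ r) :
    (x ^ (1 / r) + y ^ (1 / r)) ^ r ≤ 2 ^ (r - 1) * (x + y) := by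
  have hr0 : r ≠ 0 := by positivity
  calc (x ^ (1 / r) + y ^ (1 / r)) ^ r ≤ 2 ^ (r - 1) * ((x ^ (1 / r)) ^ r + (y ^ (1 / r)) ^ r) :=
        ENNReal.rpow_add_le_mul_rpow_add_rpow _ _ hr
    _ = 2 ^ (r - 1) * (x + y) := by
        simp only [← ENNReal.rpow_mul, one_div_mul_cancel hr0, ENNReal.rpow_one]

noncomputable def hellingerIntegrand (γ a b : ℝ) : ℝ := |a ^ (1 / γ) - b ^ (1 / γ)| ^ γ

lemma hellingerIntegrand_nonneg (γ a b : ℝ) : 0 ≤ hellingerIntegrand γ a b :=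
  Real.rpow_nonneg (abs_nonneg _) _

lemma hellingerIntegrand_le_add {γ a b : ℝ} (hγ : 0 < γ) (ha : 0 ≤ a) (hb : 0 ≤ b) :
    hellingerIntegrand γ a b ≤ a + b := by
  have h := abs_sub_rpow_le_rpow_add_rpow hγ.le (Real.rpow_nonneg ha (1 / γ))
    (Real.rpow_nonneg hb (1 / γ))
  rwa [← Real.rpow_mul ha, ← Real.rpow_mul hb, one_div_mul_cancel hγ.ne', Real.rpow_one,
    Real.rpow_one] at h

lemma hellingerIntegrand_le_rpow_mul {γ α a b : ℝ} (hγ : 0 < γ) (hα1 : 1 ≤ α) (hα2 : α ≤ 2)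
    (ha : 0 ≤ a) (hb : 0 ≤ b) :
    hellingerIntegrand γ a b ≤ hellingerIntegrand (γ * α) a b ^ (1 / α) *
      (a ^ ((α - 1) / (γ * α)) + b ^ ((α - 1) / (γ * α))) ^ γ := by
  have hα0 : 0 < α := by linarith
  have hpow : ∀ {x : ℝ}, 0 ≤ x → ∀ s, x ^ (s / (γ * α)) = (x ^ (1 / (γ * α))) ^ s :=
    fun hx s ↦ by rw [← Real.rpow_mul hx]; ring_nf
  have hu := Real.rpow_nonneg ha (1 / (γ * α))
  have hv := Real.rpow_nonneg hb (1 / (γ * α))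
  calc hellingerIntegrand γ a b
      = |(a ^ (1 / (γ * α))) ^ α - (b ^ (1 / (γ * α))) ^ α| ^ γ := by
        rw [hellingerIntegrand, ← hpow ha, ← hpow hb]
        field_simp
    _ ≤ (|a ^ (1 / (γ * α)) - b ^ (1 / (γ * α))| *
          ((a ^ (1 / (γ * α))) ^ (α - 1) + (b ^ (1 / (γ * α))) ^ (α - 1))) ^ γ := by
        gcongr
        exact abs_rpow_sub_rpow_le hα1 hα2 hu hv
    _ = _ := by
        rw [Real.mul_rpow (abs_nonneg _) (by positivity), hellingerIntegrand,
          ← Real.rpow_mul (abs_nonneg _), ← hpow ha, ← hpow hb]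
        field_simp

section

variable {X : Type*} [MeasurableSpace X] {μ : Measure X} {p q : X → ℝ}

lemma aemeasurable_hellingerIntegrand (γ : ℝ) (hp : AEMeasurable p μ) (hq : AEMeasurable q μ) :
    AEMeasurable (fun x ↦ hellingerIntegrand γ (p x) (q x)) μ := by
  unfold hellingerIntegrand
  fun_prop

lemma lintegral_hellingerIntegrand_le_add {γ : ℝ} (hγ : 0 < γ) (hp : AEMeasurable p μ)
    (hp0 : ∀ x, 0 ≤ p x) (hq0 : ∀ x, 0 ≤ q x) :
    ∫⁻ x, ENNReal.ofReal (hellingerIntegrand γ (p x) (q x)) ∂μ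
      ≤ ∫⁻ x, ENNReal.ofReal (p x) ∂μ + ∫⁻ x, ENNReal.ofReal (q x) ∂μ := by
  rw [← lintegral_add_left' hp.ennreal_ofReal]
  refine lintegral_mono fun x ↦ ?_
  rw [← ENNReal.ofReal_add (hp0 x) (hq0 x)]
  exact ENNReal.ofReal_le_ofReal (hellingerIntegrand_le_add hγ (hp0 x) (hq0 x))

lemma lintegral_rpow_one_div_add_rpow_one_div_rpow_le {r : ℝ} (hr : 1 ≤ r) (hp : AEMeasurable p μ)
    (hp0 : ∀ x, 0 ≤ p x) (hq0 : ∀ x, 0 ≤ q x)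
    (hp1 : ∫⁻ x, ENNReal.ofReal (p x) ∂μ = 1) (hq1 : ∫⁻ x, ENNReal.ofReal (q x) ∂μ = 1) :
    ∫⁻ x, ENNReal.ofReal (p x ^ (1 / r) + q x ^ (1 / r)) ^ r ∂μ ≤ 2 ^ r :=
  calc ∫⁻ x, ENNReal.ofReal (p x ^ (1 / r) + q x ^ (1 / r)) ^ r ∂μ
      ≤ ∫⁻ x, 2 ^ (r - 1) * (ENNReal.ofReal (p x) + ENNReal.ofReal (q x)) ∂μ := by
        refine lintegral_mono fun x ↦ ?_
        have hr' : 0 ≤ 1 / r := by positivity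
        rw [ENNReal.ofReal_add (Real.rpow_nonneg (hp0 x) _) (Real.rpow_nonneg (hq0 x) _),
          ← ENNReal.ofReal_rpow_of_nonneg (hp0 x) hr', ← ENNReal.ofReal_rpow_of_nonneg (hq0 x) hr']
        exact ENNReal.rpow_one_div_add_rpow_one_div_rpow_le _ _ hr
    _ = 2 ^ (r - 1) * 2 := by
        rw [lintegral_const_mul' _ _ (by simp), lintegral_add_left' hp.ennreal_ofReal, hp1, hq1,
          one_add_one_eq_two]
    _ = 2 ^ r := by
        conv_rhs => rw [← sub_add_cancel r 1, ENNReal.rpow_add _ _ two_ne_zero ENNReal.ofNat_ne_top,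
          ENNReal.rpow_one]

lemma lintegral_hellingerIntegrand_le_rpow_mul_two_rpow {γ α β : ℝ} (hγ : 1 ≤ γ)
    (hαβ : α.HolderConjugate β) (hα2 : α ≤ 2) (hp : AEMeasurable p μ) (hq : AEMeasurable q μ)
    (hp0 : ∀ x, 0 ≤ p x) (hq0 : ∀ x, 0 ≤ q x)
    (hp1 : ∫⁻ x, ENNReal.ofReal (p x) ∂μ = 1) (hq1 : ∫⁻ x, ENNReal.ofReal (q x) ∂μ = 1) :
    ∫⁻ x, ENNReal.ofReal (hellingerIntegrand γ (p x) (q x)) ∂μ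
      ≤ (∫⁻ x, ENNReal.ofReal (hellingerIntegrand (γ * α) (p x) (q x)) ∂μ) ^ (1 / α) * 2 ^ γ := by
  have hγ0 : 0 < γ := by linarith
  have hα0 := hαβ.pos
  have hβ0 := hαβ.symm.pos
  have he : (α - 1) / (γ * α) = 1 / (γ * β) := by
    rw [div_eq_div_iff (by positivity) (by positivity)]
    linear_combination γ * hαβ.sub_one_mul_conj
  calc ∫⁻ x, ENNReal.ofReal (hellingerIntegrand γ (p x) (q x)) ∂μ
      ≤ ∫⁻ x, ENNReal.ofReal (hellingerIntegrand (γ * α) (p x) (q x)) ^ (1 / α)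
          * ENNReal.ofReal (p x ^ (1 / (γ * β)) + q x ^ (1 / (γ * β))) ^ γ ∂μ := by
        refine lintegral_mono fun x ↦ ?_
        have hw : 0 ≤ p x ^ (1 / (γ * β)) + q x ^ (1 / (γ * β)) :=
          add_nonneg (Real.rpow_nonneg (hp0 x) _) (Real.rpow_nonneg (hq0 x) _)
        rw [ENNReal.ofReal_rpow_of_nonneg (hellingerIntegrand_nonneg _ _ _) (by positivity),
          ENNReal.ofReal_rpow_of_nonneg hw hγ0.le,
          ← ENNReal.ofReal_mul (Real.rpow_nonneg (hellingerIntegrand_nonneg _ _ _) _), ← he]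
        exact ENNReal.ofReal_le_ofReal
          (hellingerIntegrand_le_rpow_mul hγ0 hαβ.lt.le hα2 (hp0 x) (hq0 x))
    _ ≤ (∫⁻ x, (ENNReal.ofReal (hellingerIntegrand (γ * α) (p x) (q x)) ^ (1 / α)) ^ α ∂μ)
            ^ (1 / α) *
          (∫⁻ x, (ENNReal.ofReal (p x ^ (1 / (γ * β)) + q x ^ (1 / (γ * β))) ^ γ) ^ β ∂μ)
            ^ (1 / β) :=
        ENNReal.lintegral_mul_le_Lp_mul_Lq μ hαβ
          ((aemeasurable_hellingerIntegrand _ hp hq).ennreal_ofReal.pow_const _) (by fun_prop)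
    _ = (∫⁻ x, ENNReal.ofReal (hellingerIntegrand (γ * α) (p x) (q x)) ∂μ) ^ (1 / α) *
          (∫⁻ x, ENNReal.ofReal (p x ^ (1 / (γ * β)) + q x ^ (1 / (γ * β))) ^ (γ * β) ∂μ)
            ^ (1 / β) := by
        simp_rw [← ENNReal.rpow_mul, one_div_mul_cancel hα0.ne', ENNReal.rpow_one]
    _ ≤ (∫⁻ x, ENNReal.ofReal (hellingerIntegrand (γ * α) (p x) (q x)) ∂μ) ^ (1 / α)
          * (2 ^ (γ * β)) ^ (1 / β) := by
        gcongr
        exact lintegral_rpow_one_div_add_rpow_one_div_rpow_le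
          (one_le_mul_of_one_le_of_one_le hγ hαβ.symm.lt.le) hp hp0 hq0 hp1 hq1
    _ = _ := by
        rw [← ENNReal.rpow_mul, mul_one_div, mul_div_cancel_right₀ _ hβ0.ne']

lemma integral_hellingerIntegrand_le_two_rpow_mul {γ α : ℝ} (hγ : 1 ≤ γ) (hα1 : 1 ≤ α)
    (hα2 : α ≤ 2) (hp0 : ∀ x, 0 ≤ p x) (hq0 : ∀ x, 0 ≤ q x)
    (hp1 : ∫ x, p x ∂μ = 1) (hq1 : ∫ x, q x ∂μ = 1) :
    ∫ x, hellingerIntegrand γ (p x) (q x) ∂μ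
      ≤ 2 ^ γ * (∫ x, hellingerIntegrand (γ * α) (p x) (q x) ∂μ) ^ (1 / α) := by
  have hγ0 : 0 < γ := by linarith
  rcases hα1.eq_or_lt with rfl | hα
  · rw [mul_one, div_one, Real.rpow_one]
    exact le_mul_of_one_le_left (integral_nonneg fun x ↦ hellingerIntegrand_nonneg _ _ _)
      (Real.one_le_rpow one_le_two hγ0.le)
  have hpi : Integrable p μ := .of_integral_ne_zero (by simp [hp1])
  have hqi : Integrable q μ := .of_integral_ne_zero (by simp [hq1])
  have hp1' : ∫⁻ x, ENNReal.ofReal (p x) ∂μ = 1 := by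
    rw [← ofReal_integral_eq_lintegral_ofReal hpi (ae_of_all _ hp0), hp1, ENNReal.ofReal_one]
  have hq1' : ∫⁻ x, ENNReal.ofReal (q x) ∂μ = 1 := by
    rw [← ofReal_integral_eq_lintegral_ofReal hqi (ae_of_all _ hq0), hq1, ENNReal.ofReal_one]
  have hfin : ∫⁻ x, ENNReal.ofReal (hellingerIntegrand (γ * α) (p x) (q x)) ∂μ ≠ ⊤ :=
    ((lintegral_hellingerIntegrand_le_add (by positivity) hpi.aemeasurable hp0 hq0).trans_lt
      (by simp [hp1', hq1'])).ne
  have key := lintegral_hellingerIntegrand_le_rpow_mul_two_rpow hγ (.conjExponent hα) hα2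
    hpi.aemeasurable hqi.aemeasurable hp0 hq0 hp1' hq1'
  rw [integral_eq_lintegral_of_nonneg_ae (ae_of_all _ fun x ↦ hellingerIntegrand_nonneg _ _ _)
      (aemeasurable_hellingerIntegrand _ hpi.aemeasurable hqi.aemeasurable).aestronglyMeasurable,
    integral_eq_lintegral_of_nonneg_ae (ae_of_all _ fun x ↦ hellingerIntegrand_nonneg _ _ _)
      (aemeasurable_hellingerIntegrand _ hpi.aemeasurable hqi.aemeasurable).aestronglyMeasurable]
  calc _ ≤ ((∫⁻ x, ENNReal.ofReal (hellingerIntegrand (γ * α) (p x) (q x)) ∂μ) ^ (1 / α)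
        * 2 ^ γ).toReal :=
        ENNReal.toReal_mono
          (ENNReal.mul_ne_top (ENNReal.rpow_ne_top_of_nonneg (by positivity) hfin) (by simp)) key
    _ = _ := by
        rw [ENNReal.toReal_mul, ← ENNReal.toReal_rpow, ← ENNReal.toReal_rpow, mul_comm]
        simp

end

lemma half_mul_two_rpow_mul_rpow_rpow_eq {γ α I : ℝ} (hγ : 0 < γ) (hα : 0 < α) (hI : 0 ≤ I) :
    ((1 / 2) * (2 ^ γ * I ^ (1 / α))) ^ (1 / γ)
      = 2 ^ (1 - 1 / γ + 1 / (γ * α)) * ((1 / 2) * I) ^ (1 / (γ * α)) := by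
  have h2 : (0 : ℝ) ≤ 2 := zero_le_two
  rw [show (1 / 2 : ℝ) = 2 ^ (-1 : ℝ) by norm_num, ← mul_assoc, ← Real.rpow_add two_pos,
    Real.mul_rpow (by positivity) (by positivity), Real.mul_rpow (by positivity) hI,
    ← Real.rpow_mul h2, ← Real.rpow_mul h2, ← Real.rpow_mul hI, ← mul_assoc,
    ← Real.rpow_add two_pos]
  congr 2
  · field_simp
    ring
  · field_simp

theorem generalizedHellinger_le_rpow_mul_generalizedHellinger_general
    {X : Type*} [MeasurableSpace X] (μ : Measure X)
    (p q : X → ℝ)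
    (hp0 : ∀ x, 0 ≤ p x) (hq0 : ∀ x, 0 ≤ q x)
    (hp1 : ∫ x, p x ∂μ = 1) (hq1 : ∫ x, q x ∂μ = 1)
    (γ α : ℝ) (hγ : 1 ≤ γ) (hα1 : 1 ≤ α) (hα2 : α ≤ 2) :
    ((1 / 2) * ∫ x, |p x ^ (1 / γ) - q x ^ (1 / γ)| ^ γ ∂μ) ^ (1 / γ)
      ≤ 2 ^ (1 - 1 / γ + 1 / (γ * α)) *
        ((1 / 2) * ∫ x, |p x ^ (1 / (γ * α)) - q x ^ (1 / (γ * α))| ^ (γ * α) ∂μ)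
          ^ (1 / (γ * α)) := by
  change ((1 / 2) * ∫ x, hellingerIntegrand γ (p x) (q x) ∂μ) ^ (1 / γ)
    ≤ 2 ^ (1 - 1 / γ + 1 / (γ * α)) *
      ((1 / 2) * ∫ x, hellingerIntegrand (γ * α) (p x) (q x) ∂μ) ^ (1 / (γ * α))
  have hI : 0 ≤ ∫ x, hellingerIntegrand (γ * α) (p x) (q x) ∂μ :=
    integral_nonneg fun x ↦ hellingerIntegrand_nonneg _ _ _
  calc _ ≤ ((1 / 2) * (2 ^ γ * (∫ x, hellingerIntegrand (γ * α) (p x) (q x) ∂μ) ^ (1 / α)))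
        ^ (1 / γ) := by
        gcongr
        · exact mul_nonneg one_half_pos.le (integral_nonneg fun x ↦ hellingerIntegrand_nonneg _ _ _)
        · exact integral_hellingerIntegrand_le_two_rpow_mul hγ hα1 hα2 hp0 hq0 hp1 hq1
    _ = _ := half_mul_two_rpow_mul_rpow_rpow_eq (by linarith) (by linarith) hI

/-- Let `p` and `q` be probability density functions with respect to a measure `μ`,
let `γ ≥ 1`, `1 ≤ α ≤ 2`, and `β` with `1/α + 1/β = 1`.  Then the generalized
Hellinger distance satisfies
`D_{γ,H}(P,Q) ≤ 2^(1 - 1/γ + 1/(γα)) * D_{γα,H}(P,Q)`, where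
`D_{γ,H}(P,Q) = ((1/2) ∫ |p^(1/γ) - q^(1/γ)|^γ dμ)^(1/γ)`. -/
theorem generalizedHellinger_le_rpow_mul_generalizedHellinger
    {X : Type*} [MeasurableSpace X] (μ : Measure X) [SigmaFinite μ]
    (p q : X → ℝ) (hpm : Measurable p) (hqm : Measurable q)
    (hp0 : ∀ x, 0 ≤ p x) (hq0 : ∀ x, 0 ≤ q x)
    (hp1 : ∫ x, p x ∂μ = 1) (hq1 : ∫ x, q x ∂μ = 1)
    (γ α β : ℝ) (hγ : 1 ≤ γ) (hα1 : 1 ≤ α) (hα2 : α ≤ 2)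
    (hsum : 1 / α + 1 / β = 1) :
    ((1 / 2) * ∫ x, |p x ^ (1 / γ) - q x ^ (1 / γ)| ^ γ ∂μ) ^ (1 / γ)
      ≤ 2 ^ (1 - 1 / γ + 1 / (γ * α)) *
        ((1 / 2) * ∫ x, |p x ^ (1 / (γ * α)) - q x ^ (1 / (γ * α))| ^ (γ * α) ∂μ)
          ^ (1 / (γ * α)) :=
  generalizedHellinger_le_rpow_mul_generalizedHellinger_general μ p q hp0 hq0 hp1 hq1 γ α hγ hα1 hα2
end

section
/- Let N ~ Poisson(n) with n ≥ 1 and let ε > 0. Then n · E[(N+1)^{-ε-1}] ≤ n·exp(-n/12) + 2^{1+ε} n^{-ε}. -/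
/-!
The law of `N` is `Po(n)`. Split the expectation of `(N + 1)^(-ε-1) ≤ 1` at `N ≤ n/2`. The lower
tail is Chernoff's bound at `θ = 1/2`: for `k ≤ n/2` one has `n^k ≤ 2^(n/2) (n/2)^k`, so
`P(N ≤ n/2) ≤ e^(-n) 2^(n/2) e^(n/2) = e^(-(1 - log 2) n/2) ≤ e^(-n/12)`. On `N > n/2` the
integrand is at most `(n/2)^(-ε-1)`, and `n (n/2)^(-ε-1) = 2^(1+ε) n^(-ε)`.
-/

open MeasureTheory Real ProbabilityTheory
open scoped NNReal Nat

lemma map_eq_poissonMeasure {Ω : Type*} [MeasurableSpace Ω] {μ : Measure Ω} {N : Ω → ℕ}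
    (hNm : Measurable N) {r : ℝ≥0}
    (hN : ∀ k : ℕ, μ {ω | N ω = k} = ENNReal.ofReal (exp (-r) * r ^ k / k !)) :
    μ.map N = Po(r) := by
  refine Measure.ext_iff_singleton.2 fun k => ?_
  rw [Measure.map_apply hNm (measurableSet_singleton k), poissonMeasure_singleton]
  exact hN k

lemma poissonMeasure_real_le_exp_neg_div_twelve {r : ℝ≥0} {s : Finset ℕ}
    (hs : ∀ k ∈ s, 2 * (k : ℝ) ≤ r) : Po(r).real s ≤ exp (-r / 12) := by
  have hterm : ∀ k ∈ s,
      exp (-r) * r ^ k / k ! ≤ exp (-r) * 2 ^ (r / 2 : ℝ) * ((r / 2) ^ k / k !) := by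
    intro k hk
    have h2k : (2 : ℝ) ^ k ≤ 2 ^ (r / 2 : ℝ) := by
      rw [← rpow_natCast]
      exact rpow_le_rpow_of_exponent_le one_le_two (by linarith [hs k hk])
    calc exp (-r) * r ^ k / k ! = exp (-r) * 2 ^ k * ((r / 2) ^ k / k !) := by
          rw [div_pow]; field_simp
      _ ≤ _ := by gcongr
  have hexp : ∑ k ∈ s, ((r : ℝ) / 2) ^ k / k ! ≤ exp (r / 2) := by
    rw [exp_eq_exp_ℝ]
    exact sum_le_hasSum s (fun k _ => by positivity) (NormedSpace.expSeries_div_hasSum_exp _)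
  calc Po(r).real s = ∑ k ∈ s, exp (-r) * r ^ k / k ! := by
        simp only [← sum_measureReal_singleton, poissonMeasure_real_singleton]
    _ ≤ exp (-r) * 2 ^ (r / 2 : ℝ) * exp (r / 2) := by
        grw [Finset.sum_le_sum hterm, ← Finset.mul_sum, hexp]
    _ = exp (-((1 - log 2) / 2 * r)) := by
        rw [rpow_def_of_pos two_pos, ← exp_add, ← exp_add]; ring_nf
    _ ≤ exp (-r / 12) := by
        gcongr
        nlinarith [log_two_lt_d9, r.2]

lemma integral_add_one_rpow_poissonMeasure_le {r : ℝ≥0} (hr : 0 < r) {q : ℝ} (hq : q ≤ 0) :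
    ∫ k, ((k : ℝ) + 1) ^ q ∂Po(r) ≤ exp (-r / 12) + (r / 2 : ℝ) ^ q := by
  set s := Finset.range (⌊(r : ℝ) / 2⌋₊ + 1)
  have hr2 : (0 : ℝ) < r / 2 := by positivity
  have hs : ∀ k ∈ s, 2 * (k : ℝ) ≤ r := fun k hk => by
    have := (Nat.le_floor_iff hr2.le).1 (Nat.lt_succ_iff.1 (Finset.mem_range.1 hk))
    linarith
  have hle_one : ∀ k : ℕ, ((k : ℝ) + 1) ^ q ≤ 1 := fun k =>
    rpow_le_one_of_one_le_of_nonpos (le_add_of_nonneg_left k.cast_nonneg) hq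
  have hbound : ∀ k : ℕ, ((k : ℝ) + 1) ^ q ≤ (s : Set ℕ).indicator 1 k + (r / 2 : ℝ) ^ q := by
    intro k
    by_cases hk : k ∈ s
    · rw [Set.indicator_of_mem (Finset.mem_coe.2 hk), Pi.one_apply]
      linarith [hle_one k, rpow_nonneg hr2.le q]
    · rw [Set.indicator_of_notMem (Finset.mem_coe.not.2 hk), zero_add]
      refine rpow_le_rpow_of_nonpos hr2 ?_ hq
      have := (Nat.floor_lt hr2.le).1 (by simpa [s, Nat.lt_succ_iff] using hk)
      linarith
  have hint : Integrable (fun k : ℕ => ((k : ℝ) + 1) ^ q) Po(r) :=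
    .of_bound .of_discrete 1 (.of_forall fun k => by
      rw [norm_of_nonneg (by positivity)]
      exact hle_one k)
  have hint_s : Integrable ((s : Set ℕ).indicator 1) Po(r) :=
    (integrable_const (1 : ℝ)).indicator s.measurableSet
  calc ∫ k, ((k : ℝ) + 1) ^ q ∂Po(r)
      ≤ ∫ k, ((s : Set ℕ).indicator 1 k + (r / 2 : ℝ) ^ q) ∂Po(r) :=
        integral_mono hint (hint_s.add (integrable_const _)) hbound
    _ = Po(r).real s + (r / 2 : ℝ) ^ q := by
        rw [integral_add hint_s (integrable_const _), integral_indicator_one s.measurableSet,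
          integral_const, probReal_univ, one_smul]
    _ ≤ exp (-r / 12) + (r / 2 : ℝ) ^ q := by grw [poissonMeasure_real_le_exp_neg_div_twelve hs]

lemma mul_div_two_rpow_neg_sub_one {x : ℝ} (hx : 0 < x) (s : ℝ) :
    x * (x / 2) ^ (-s - 1) = 2 ^ (1 + s) * x ^ (-s) := by
  calc x * (x / 2) ^ (-s - 1) = x ^ (1 + (-s - 1)) * (2 ^ (-s - 1))⁻¹ := by
        rw [div_rpow hx.le zero_le_two, rpow_add hx, rpow_one, div_eq_mul_inv, mul_assoc]
    _ = 2 ^ (1 + s) * x ^ (-s) := by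
        rw [← rpow_neg zero_le_two]; ring_nf

/-- Let `N ~ Poisson(n)` with `n ≥ 1` and let `ε > 0`.  Then
`n · E[(N+1)^(-ε-1)] ≤ n·exp(-n/12) + 2^(1+ε) · n^(-ε)`. -/
theorem poisson_reciprocal_moment_bound
    {Ω : Type*} [MeasurableSpace Ω] (μ : Measure Ω) [IsProbabilityMeasure μ]
    (N : Ω → ℕ) (hNm : Measurable N) (n : ℕ) (hn : 1 ≤ n) (ε : ℝ) (hε : 0 < ε)
    (hN : ∀ k : ℕ, μ {ω | N ω = k}
      = ENNReal.ofReal (Real.exp (-(n : ℝ)) * (n : ℝ) ^ k / k.factorial)) :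
    (n : ℝ) * ∫ ω, ((N ω : ℝ) + 1) ^ (-ε - 1) ∂μ
      ≤ (n : ℝ) * Real.exp (-(n : ℝ) / 12) + 2 ^ (1 + ε) * (n : ℝ) ^ (-ε) := by
  have hlaw : μ.map N = Po(n) := map_eq_poissonMeasure hNm (by simpa using hN)
  have hmoment := integral_add_one_rpow_poissonMeasure_le (r := n) (Nat.cast_pos.2 hn)
    (q := -ε - 1) (by linarith)
  push_cast at hmoment
  calc (n : ℝ) * ∫ ω, ((N ω : ℝ) + 1) ^ (-ε - 1) ∂μ
      = n * ∫ k, ((k : ℝ) + 1) ^ (-ε - 1) ∂Po(n) := by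
        rw [← hlaw, integral_map hNm.aemeasurable .of_discrete]
    _ ≤ n * (exp (-n / 12) + (n / 2 : ℝ) ^ (-ε - 1)) := by gcongr
    _ = n * exp (-n / 12) + 2 ^ (1 + ε) * (n : ℝ) ^ (-ε) := by
        rw [mul_add, mul_div_two_rpow_neg_sub_one (Nat.cast_pos.2 hn)]
end
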